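/- arXiv:2402.15600 — 2 statements merged into one kernel-verified Lean document; each statement's English description precedes it below -/
import Mathlib

section
/- Let G be a finite graph on n vertices with |G| edges, and for each vertex t let |G_t| denote its degree. Under the permutation null distribution where a uniformly random subset C_i of size n_i receives label i, the variance of the within-cluster edge count R_i (number of edges with both endpoints in C_i) equals [n_i(n_i-1)(n-n_i)(n-n_i-1) / (n(n-1)(n-2)(n-3))] * ( |G| + (n_i-2)/(n-n_i-1) * G_C - G_E ), where G_C = sum_t |G_t|^2 - (4/n)|G|^2 and G_E = 2|G|^2/(n(n-1)). -/
open Finset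

open scoped Classical in
lemma count_subsets {n : ℕ} (ni : ℕ) (s : Finset (Fin n)) :
    ((Finset.powersetCard ni (univ : Finset (Fin n))).filter (fun C => s ⊆ C)).card
      = if s.card ≤ ni then (n - s.card).choose (ni - s.card) else 0 := by
  split_ifs with h
  · have hcomp : sᶜ.card = n - s.card := by
      simp [Finset.card_compl]
    rw [← hcomp, ← Finset.card_powersetCard]
    apply Finset.card_bij' (fun C _ => C \ s) (fun D _ => D ∪ s)
    · intro C hC
      simp only [Finset.mem_filter, Finset.mem_powersetCard] at hC
      simp only [Finset.mem_powersetCard]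
      refine ⟨fun x hx => ?_, ?_⟩
      · simp only [Finset.mem_sdiff] at hx
        simp [Finset.mem_compl, hx.2]
      · rw [Finset.card_sdiff_of_subset hC.2, hC.1.2]
    · intro D hD
      simp only [Finset.mem_powersetCard] at hD
      have hdisj : Disjoint D s := by
        rw [Finset.disjoint_right]
        intro x hxs hxD
        exact (Finset.mem_compl.mp (hD.1 hxD)) hxs
      simp only [Finset.mem_filter, Finset.mem_powersetCard]
      refine ⟨⟨Finset.subset_univ _, ?_⟩, Finset.subset_union_right⟩
      rw [Finset.card_union_of_disjoint hdisj, hD.2, Nat.sub_add_cancel h]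
    · intro C hC
      simp only [Finset.mem_filter] at hC
      exact Finset.sdiff_union_of_subset hC.2
    · intro D hD
      simp only [Finset.mem_powersetCard] at hD
      have hdisj : Disjoint D s := by
        rw [Finset.disjoint_right]
        intro x hxs hxD
        exact (Finset.mem_compl.mp (hD.1 hxD)) hxs
      exact Finset.union_sdiff_cancel_right hdisj
  · rw [Finset.card_eq_zero, Finset.filter_eq_empty_iff]
    intro C hC hsC
    rw [Finset.mem_powersetCard] at hC
    exact h (hC.2 ▸ Finset.card_le_card hsC)

open scoped Classical in
noncomputable def Ve {n : ℕ} (e : Sym2 (Fin n)) : Finset (Fin n) :=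
  Finset.univ.filter (fun v => v ∈ e)

open scoped Classical in
lemma mem_Ve {n : ℕ} (e : Sym2 (Fin n)) (v : Fin n) : v ∈ Ve e ↔ v ∈ e := by
  simp [Ve]

open scoped Classical in
lemma Ve_mk {n : ℕ} (a b : Fin n) : Ve s(a, b) = {a, b} := by
  ext v; simp [mem_Ve, Sym2.mem_iff]

open scoped Classical in
lemma card_Ve {n : ℕ} {G : SimpleGraph (Fin n)} [DecidableRel G.Adj]
    {e : Sym2 (Fin n)} (he : e ∈ G.edgeFinset) : (Ve e).card = 2 := by
  induction e with
  | _ a b =>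
    rw [Ve_mk]
    rw [SimpleGraph.mem_edgeFinset, SimpleGraph.mem_edgeSet] at he
    exact Finset.card_pair (G.ne_of_adj he)

open scoped Classical in
lemma Ve_inj {n : ℕ} {G : SimpleGraph (Fin n)} [DecidableRel G.Adj]
    {e f : Sym2 (Fin n)} (he : e ∈ G.edgeFinset) (hf : f ∈ G.edgeFinset)
    (h : Ve e = Ve f) : e = f := by
  induction e with
  | _ a b =>
    induction f with
    | _ c d =>
      rw [Ve_mk, Ve_mk] at h
      have hc : c ∈ ({a, b} : Finset (Fin n)) := h ▸ Finset.mem_insert_self c {d}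
      have hd : d ∈ ({a, b} : Finset (Fin n)) := h ▸ Finset.mem_insert_of_mem (Finset.mem_singleton_self d)
      rw [SimpleGraph.mem_edgeFinset, SimpleGraph.mem_edgeSet] at he hf
      have hab := G.ne_of_adj he
      have hcd := G.ne_of_adj hf
      simp only [Finset.mem_insert, Finset.mem_singleton] at hc hd
      rw [Sym2.eq_iff]
      rcases hc with rfl | rfl
      · rcases hd with rfl | rfl
        · exact absurd rfl hcd
        · exact Or.inl ⟨rfl, rfl⟩
      · rcases hd with rfl | rfl
        · exact Or.inr ⟨rfl, rfl⟩
        · exact absurd rfl hcd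

lemma choose_step (a b : ℕ) (ha : 1 ≤ a) (hb : 1 ≤ b) :
    a * (a - 1).choose (b - 1) = b * a.choose b := by
  obtain ⟨a', rfl⟩ : ∃ a', a = a' + 1 := ⟨a - 1, by omega⟩
  obtain ⟨b', rfl⟩ : ∃ b', b = b' + 1 := ⟨b - 1, by omega⟩
  simp only [Nat.add_sub_cancel]
  rw [show a' + 1 = Nat.succ a' from rfl, Nat.add_one_mul_choose_eq,
    show b' + 1 = Nat.succ b' from rfl]
  ring

-- c_j as nat
def cnt (n ni j : ℕ) : ℕ := if j ≤ ni then (n - j).choose (ni - j) else 0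

lemma cnt2_eq {n ni : ℕ} (hn : 4 ≤ n) (hni1 : 2 ≤ ni) (hni2 : ni ≤ n - 2) :
    (cnt n ni 2 : ℝ) * ((n : ℝ) * ((n : ℝ) - 1)) =
      (ni : ℝ) * ((ni : ℝ) - 1) * (n.choose ni : ℝ) := by
  have h1 : (1:ℕ) ≤ n := by omega
  have h2 : (1:ℕ) ≤ n - 1 := by omega
  have key : n * ((n-1) * cnt n ni 2) = ni * ((ni - 1) * n.choose ni) := by
    have s1 := choose_step n ni h1 (by omega)
    have s2 := choose_step (n-1) (ni-1) h2 (by omega)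
    simp only [cnt, if_pos hni1]
    have e1 : n - 1 - 1 = n - 2 := by omega
    have e2 : ni - 1 - 1 = ni - 2 := by omega
    rw [e1, e2] at s2
    calc n * ((n-1) * (n-2).choose (ni-2)) = n * ((ni-1) * (n-1).choose (ni-1)) := by rw [s2]
    _ = (ni-1) * (n * (n-1).choose (ni-1)) := by ring
    _ = (ni-1) * (ni * n.choose ni) := by rw [s1]
    _ = ni * ((ni - 1) * n.choose ni) := by ring
  have := congrArg (fun x : ℕ => (x : ℝ)) key
  push_cast [Nat.cast_sub h1, Nat.cast_sub hni1, Nat.cast_sub (show 1 ≤ ni by omega)] at this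
  push_cast
  nlinarith [this]

lemma cnt_ratio (n ni : ℕ) (hni : ni ≤ n) :
    ∀ j, j ≤ ni → n.descFactorial j * cnt n ni j = ni.descFactorial j * n.choose ni := by
  intro j
  induction j with
  | zero => intro _; simp [cnt]
  | succ j ih =>
    intro hj
    have hj' : j ≤ ni := by omega
    have step := choose_step (n - j) (ni - j) (by omega) (by omega)
    have e1 : n - j - 1 = n - (j+1) := by omega
    have e2 : ni - j - 1 = ni - (j+1) := by omega
    rw [e1, e2] at step
    simp only [cnt, if_pos hj, if_pos hj'] at *
    calc n.descFactorial (j+1) * (n - (j+1)).choose (ni - (j+1))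
        = n.descFactorial j * ((n - j) * (n - (j+1)).choose (ni - (j+1))) := by
          rw [Nat.descFactorial_succ]; ring
      _ = n.descFactorial j * ((ni - j) * (n - j).choose (ni - j)) := by rw [step]
      _ = (ni - j) * (n.descFactorial j * (n - j).choose (ni - j)) := by ring
      _ = (ni - j) * (ni.descFactorial j * n.choose ni) := by rw [ih hj']
      _ = ni.descFactorial (j+1) * n.choose ni := by rw [Nat.descFactorial_succ]; ring

lemma cnt3_eq {n ni : ℕ} (hn : 4 ≤ n) (hni1 : 2 ≤ ni) (hni2 : ni ≤ n - 2) :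
    (cnt n ni 3 : ℝ) * ((n : ℝ) * ((n : ℝ) - 1) * ((n : ℝ) - 2)) =
      (ni : ℝ) * ((ni : ℝ) - 1) * ((ni : ℝ) - 2) * (n.choose ni : ℝ) := by
  rcases Nat.lt_or_ge ni 3 with h | h
  · have hni : ni = 2 := by omega
    subst hni
    simp [cnt]
  · have key := cnt_ratio n ni (by omega) 3 h
    have := congrArg (fun x : ℕ => (x : ℝ)) key
    simp only [Nat.descFactorial] at this
    push_cast [Nat.cast_sub (show 1 ≤ n by omega), Nat.cast_sub (show 2 ≤ n by omega),
      Nat.cast_sub (show 1 ≤ ni by omega), Nat.cast_sub (show 2 ≤ ni by omega),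
      Nat.sub_zero] at this
    linear_combination this

lemma cnt4_eq {n ni : ℕ} (hn : 4 ≤ n) (hni1 : 2 ≤ ni) (hni2 : ni ≤ n - 2) :
    (cnt n ni 4 : ℝ) * ((n : ℝ) * ((n : ℝ) - 1) * ((n : ℝ) - 2) * ((n : ℝ) - 3)) =
      (ni : ℝ) * ((ni : ℝ) - 1) * ((ni : ℝ) - 2) * ((ni : ℝ) - 3) * (n.choose ni : ℝ) := by
  rcases Nat.lt_or_ge ni 4 with h | h
  · have hcnt : cnt n ni 4 = 0 := by simp [cnt]; omega
    have : ni = 2 ∨ ni = 3 := by omega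
    rcases this with rfl | rfl <;> simp [hcnt] <;> ring
  · have key := cnt_ratio n ni (by omega) 4 h
    have := congrArg (fun x : ℕ => (x : ℝ)) key
    simp only [Nat.descFactorial] at this
    push_cast [Nat.cast_sub (show 1 ≤ n by omega), Nat.cast_sub (show 2 ≤ n by omega),
      Nat.cast_sub (show 3 ≤ n by omega), Nat.cast_sub (show 1 ≤ ni by omega),
      Nat.cast_sub (show 2 ≤ ni by omega), Nat.cast_sub (show 3 ≤ ni by omega),
      Nat.sub_zero] at this
    linear_combination this

open scoped Classical in
lemma filter_card_eq {n : ℕ} (G : SimpleGraph (Fin n)) [DecidableRel G.Adj]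
    (C : Finset (Fin n)) :
    ((G.edgeFinset.filter (fun e => ∀ v ∈ e, v ∈ C)).card : ℝ)
      = ∑ e ∈ G.edgeFinset, if Ve e ⊆ C then (1 : ℝ) else 0 := by
  rw [Finset.card_filter]
  push_cast
  refine Finset.sum_congr rfl fun e _ => ?_
  congr 1
  simp only [eq_iff_iff, Ve, Finset.subset_iff, Finset.mem_filter, Finset.mem_univ, true_and]

open scoped Classical in
lemma inner_count {n : ℕ} (ni : ℕ) (s : Finset (Fin n)) :
    ∑ C ∈ Finset.powersetCard ni (univ : Finset (Fin n)),
      (if s ⊆ C then (1 : ℝ) else 0) = (cnt n ni s.card : ℝ) := by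
  rw [Finset.sum_boole]
  norm_cast
  rw [count_subsets ni s, cnt]

open scoped Classical in
lemma sum_R {n : ℕ} (G : SimpleGraph (Fin n)) [DecidableRel G.Adj] (ni : ℕ) :
    ∑ C ∈ Finset.powersetCard ni (univ : Finset (Fin n)),
      ((G.edgeFinset.filter (fun e => ∀ v ∈ e, v ∈ C)).card : ℝ)
      = (G.edgeFinset.card : ℝ) * (cnt n ni 2 : ℝ) := by
  simp_rw [filter_card_eq]
  rw [Finset.sum_comm]
  have : ∀ e ∈ G.edgeFinset,
      ∑ C ∈ Finset.powersetCard ni (univ : Finset (Fin n)),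
        (if Ve e ⊆ C then (1 : ℝ) else 0) = (cnt n ni 2 : ℝ) := by
    intro e he
    rw [inner_count, card_Ve he]
  rw [Finset.sum_congr rfl this, Finset.sum_const, nsmul_eq_mul]

open scoped Classical in
lemma boole_mul_boole (p q : Prop) :
    (if p then (1:ℝ) else 0) * (if q then 1 else 0) = if p ∧ q then 1 else 0 := by
  split_ifs <;> simp_all

open scoped Classical in
lemma Ve_inter {n : ℕ} (e f : Sym2 (Fin n)) :
    Ve e ∩ Ve f = Finset.univ.filter (fun t => t ∈ e ∧ t ∈ f) := by
  ext t; simp [Ve]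

open scoped Classical in
lemma sum_inter {n : ℕ} (G : SimpleGraph (Fin n)) [DecidableRel G.Adj] :
    ∑ e ∈ G.edgeFinset, ∑ f ∈ G.edgeFinset, ((Ve e ∩ Ve f).card : ℝ)
      = ∑ t : Fin n, (G.degree t : ℝ) ^ 2 := by
  have h1 : ∀ e f : Sym2 (Fin n), ((Ve e ∩ Ve f).card : ℝ)
      = ∑ t : Fin n, (if t ∈ e then (1:ℝ) else 0) * (if t ∈ f then 1 else 0) := by
    intro e f
    rw [Ve_inter, Finset.card_filter]
    push_cast
    refine Finset.sum_congr rfl fun t _ => ?_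
    by_cases h1 : t ∈ e <;> by_cases h2 : t ∈ f <;> simp [h1, h2]
  simp_rw [h1]
  have swap1 : ∑ e ∈ G.edgeFinset, ∑ f ∈ G.edgeFinset, ∑ t : Fin n,
        (if t ∈ e then (1:ℝ) else 0) * (if t ∈ f then 1 else 0)
      = ∑ t : Fin n, ∑ e ∈ G.edgeFinset, ∑ f ∈ G.edgeFinset,
        (if t ∈ e then (1:ℝ) else 0) * (if t ∈ f then 1 else 0) := by
    calc ∑ e ∈ G.edgeFinset, ∑ f ∈ G.edgeFinset, ∑ t : Fin n,
          (if t ∈ e then (1:ℝ) else 0) * (if t ∈ f then 1 else 0)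
        = ∑ e ∈ G.edgeFinset, ∑ t : Fin n, ∑ f ∈ G.edgeFinset,
          (if t ∈ e then (1:ℝ) else 0) * (if t ∈ f then 1 else 0) :=
          Finset.sum_congr rfl fun e _ => Finset.sum_comm
      _ = ∑ t : Fin n, ∑ e ∈ G.edgeFinset, ∑ f ∈ G.edgeFinset,
          (if t ∈ e then (1:ℝ) else 0) * (if t ∈ f then 1 else 0) := Finset.sum_comm
  rw [swap1]
  refine Finset.sum_congr rfl fun t _ => ?_
  have hdeg : ∑ e ∈ G.edgeFinset, (if t ∈ e then (1:ℝ) else 0) = (G.degree t : ℝ) := by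
    rw [Finset.sum_boole]
    norm_cast
    rw [← SimpleGraph.card_incidenceFinset_eq_degree]
    congr 1
    rw [SimpleGraph.incidenceFinset_eq_filter]
  calc ∑ e ∈ G.edgeFinset, ∑ f ∈ G.edgeFinset,
        (if t ∈ e then (1:ℝ) else 0) * (if t ∈ f then 1 else 0)
      = (∑ e ∈ G.edgeFinset, if t ∈ e then (1:ℝ) else 0)
        * (∑ f ∈ G.edgeFinset, if t ∈ f then (1:ℝ) else 0) := by
        rw [Finset.sum_mul_sum]
    _ = (G.degree t : ℝ) ^ 2 := by rw [hdeg]; ring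

open scoped Classical in
lemma pair_cnt {n ni : ℕ} {G : SimpleGraph (Fin n)} [DecidableRel G.Adj]
    {e f : Sym2 (Fin n)} (he : e ∈ G.edgeFinset) (hf : f ∈ G.edgeFinset) :
    (cnt n ni ((Ve e ∪ Ve f).card) : ℝ)
      = (cnt n ni 4 : ℝ)
        + ((Ve e ∩ Ve f).card : ℝ) * ((cnt n ni 3 : ℝ) - (cnt n ni 4 : ℝ))
        + (if e = f then (1:ℝ) else 0)
          * ((cnt n ni 2 : ℝ) - 2 * (cnt n ni 3 : ℝ) + (cnt n ni 4 : ℝ)) := by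
  have hce : (Ve e).card = 2 := card_Ve he
  have hcf : (Ve f).card = 2 := card_Ve hf
  have hui : (Ve e ∪ Ve f).card + (Ve e ∩ Ve f).card = 4 := by
    rw [Finset.card_union_add_card_inter, hce, hcf]
  have hile : (Ve e ∩ Ve f).card ≤ 2 := hce ▸ Finset.card_le_card Finset.inter_subset_left
  interval_cases h : (Ve e ∩ Ve f).card
  · have hef : e ≠ f := by
      intro rfl'
      subst rfl'
      simp [hce] at h
    have hu : (Ve e ∪ Ve f).card = 4 := by omega
    rw [hu, if_neg hef]
    push_cast
    try ring
  · have hef : e ≠ f := by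
      intro rfl'
      subst rfl'
      simp [hce] at h
    have hu : (Ve e ∪ Ve f).card = 3 := by omega
    rw [hu, if_neg hef]
    push_cast
    try ring
  · have heqf : Ve e = Ve f := by
      have h1 : Ve e ∩ Ve f = Ve e :=
        Finset.eq_of_subset_of_card_le Finset.inter_subset_left (by omega)
      have h2 : Ve e ∩ Ve f = Ve f :=
        Finset.eq_of_subset_of_card_le Finset.inter_subset_right (by omega)
      rw [← h1, h2]
    have hef : e = f := Ve_inj he hf heqf
    have hu : (Ve e ∪ Ve f).card = 2 := by omega
    rw [hu, if_pos hef]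
    push_cast
    try ring

open scoped Classical in
lemma sum_Rsq {n : ℕ} (G : SimpleGraph (Fin n)) [DecidableRel G.Adj] (ni : ℕ) :
    ∑ C ∈ Finset.powersetCard ni (univ : Finset (Fin n)),
      ((G.edgeFinset.filter (fun e => ∀ v ∈ e, v ∈ C)).card : ℝ) ^ 2
      = (G.edgeFinset.card : ℝ) ^ 2 * (cnt n ni 4 : ℝ)
        + (∑ t : Fin n, (G.degree t : ℝ) ^ 2) * ((cnt n ni 3 : ℝ) - (cnt n ni 4 : ℝ))
        + (G.edgeFinset.card : ℝ)
          * ((cnt n ni 2 : ℝ) - 2 * (cnt n ni 3 : ℝ) + (cnt n ni 4 : ℝ)) := by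
  have expand : ∀ C : Finset (Fin n),
      ((G.edgeFinset.filter (fun e => ∀ v ∈ e, v ∈ C)).card : ℝ) ^ 2
        = ∑ e ∈ G.edgeFinset, ∑ f ∈ G.edgeFinset,
            (if Ve e ∪ Ve f ⊆ C then (1:ℝ) else 0) := by
    intro C
    rw [filter_card_eq, sq, Finset.sum_mul_sum]
    refine Finset.sum_congr rfl fun e _ => Finset.sum_congr rfl fun f _ => ?_
    by_cases h1 : Ve e ⊆ C <;> by_cases h2 : Ve f ⊆ C <;>
      simp [h1, h2, Finset.union_subset_iff]
  simp_rw [expand]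
  have swap1 : ∑ C ∈ Finset.powersetCard ni (univ : Finset (Fin n)),
        ∑ e ∈ G.edgeFinset, ∑ f ∈ G.edgeFinset, (if Ve e ∪ Ve f ⊆ C then (1:ℝ) else 0)
      = ∑ e ∈ G.edgeFinset, ∑ f ∈ G.edgeFinset,
        ∑ C ∈ Finset.powersetCard ni (univ : Finset (Fin n)),
          (if Ve e ∪ Ve f ⊆ C then (1:ℝ) else 0) := by
    calc ∑ C ∈ Finset.powersetCard ni (univ : Finset (Fin n)),
          ∑ e ∈ G.edgeFinset, ∑ f ∈ G.edgeFinset, (if Ve e ∪ Ve f ⊆ C then (1:ℝ) else 0)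
        = ∑ e ∈ G.edgeFinset,
          ∑ C ∈ Finset.powersetCard ni (univ : Finset (Fin n)),
            ∑ f ∈ G.edgeFinset, (if Ve e ∪ Ve f ⊆ C then (1:ℝ) else 0) := Finset.sum_comm
      _ = ∑ e ∈ G.edgeFinset, ∑ f ∈ G.edgeFinset,
          ∑ C ∈ Finset.powersetCard ni (univ : Finset (Fin n)),
            (if Ve e ∪ Ve f ⊆ C then (1:ℝ) else 0) :=
            Finset.sum_congr rfl fun e _ => Finset.sum_comm
  rw [swap1]
  have inner : ∀ e ∈ G.edgeFinset, ∀ f ∈ G.edgeFinset,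
      ∑ C ∈ Finset.powersetCard ni (univ : Finset (Fin n)),
        (if Ve e ∪ Ve f ⊆ C then (1:ℝ) else 0)
      = (cnt n ni 4 : ℝ)
        + ((Ve e ∩ Ve f).card : ℝ) * ((cnt n ni 3 : ℝ) - (cnt n ni 4 : ℝ))
        + (if e = f then (1:ℝ) else 0)
          * ((cnt n ni 2 : ℝ) - 2 * (cnt n ni 3 : ℝ) + (cnt n ni 4 : ℝ)) := by
    intro e he f hf
    rw [inner_count, pair_cnt he hf]
  rw [Finset.sum_congr rfl fun e he => Finset.sum_congr rfl fun f hf => inner e he f hf]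
  simp only [Finset.sum_add_distrib, Finset.sum_const, nsmul_eq_mul, ← Finset.sum_mul]
  rw [sum_inter]
  have hdiag : ∀ e ∈ G.edgeFinset,
      ∑ f ∈ G.edgeFinset, (if e = f then (1:ℝ) else 0) = 1 := by
    intro e he
    rw [Finset.sum_ite_eq, if_pos he]
  rw [Finset.sum_congr rfl hdiag]
  simp only [Finset.sum_const, nsmul_eq_mul, mul_one]
  ring


/- Variance of the within-cluster edge count under the permutation null distribution. -/
set_option maxHeartbeats 2000000 in
open scoped Classical in
theorem variance_within_cluster_edge_count {n : ℕ} (hn : 4 ≤ n)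
    (G : SimpleGraph (Fin n)) [DecidableRel G.Adj]
    (ni : ℕ) (hni1 : 2 ≤ ni) (hni2 : ni ≤ n - 2)
    (R : Finset (Fin n) → ℝ)
    (hR : ∀ C, R C = ((G.edgeFinset.filter (fun e => ∀ v ∈ e, v ∈ C)).card : ℝ))
    (ER : ℝ)
    (hER : ER = (∑ C ∈ Finset.powersetCard ni (Finset.univ : Finset (Fin n)), R C) /
      (n.choose ni)) :
    (∑ C ∈ Finset.powersetCard ni (Finset.univ : Finset (Fin n)), (R C - ER) ^ 2) /
        (n.choose ni) =
      ((ni : ℝ) * ((ni : ℝ) - 1) * ((n : ℝ) - (ni : ℝ)) * ((n : ℝ) - (ni : ℝ) - 1)) /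
          ((n : ℝ) * ((n : ℝ) - 1) * ((n : ℝ) - 2) * ((n : ℝ) - 3)) *
        ((G.edgeFinset.card : ℝ) +
          (((ni : ℝ) - 2) / ((n : ℝ) - (ni : ℝ) - 1)) *
            ((∑ t : Fin n, (G.degree t : ℝ) ^ 2) - 4 / (n : ℝ) * (G.edgeFinset.card : ℝ) ^ 2) -
          2 * (G.edgeFinset.card : ℝ) ^ 2 / ((n : ℝ) * ((n : ℝ) - 1))) := by
  classical
  set P := Finset.powersetCard ni (Finset.univ : Finset (Fin n)) with hP
  set N : ℝ := (n.choose ni : ℝ) with hNdef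
  have hnin : ni ≤ n := by omega
  have hNpos : (0:ℝ) < N := by
    rw [hNdef]
    exact_mod_cast Nat.choose_pos hnin
  have hPcard : P.card = n.choose ni := by
    simp [hP, Finset.card_powersetCard]
  set m : ℝ := (G.edgeFinset.card : ℝ) with hm
  set S : ℝ := ∑ t : Fin n, (G.degree t : ℝ) ^ 2 with hS
  have hsum1 : ∑ C ∈ P, R C = m * (cnt n ni 2 : ℝ) := by
    simp_rw [hR]
    exact sum_R G ni
  have hsum2 : ∑ C ∈ P, R C ^ 2
      = m ^ 2 * (cnt n ni 4 : ℝ) + S * ((cnt n ni 3 : ℝ) - (cnt n ni 4 : ℝ))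
        + m * ((cnt n ni 2 : ℝ) - 2 * (cnt n ni 3 : ℝ) + (cnt n ni 4 : ℝ)) := by
    simp_rw [hR]
    exact sum_Rsq G ni
  have hexp : ∑ C ∈ P, (R C - ER) ^ 2
      = (∑ C ∈ P, R C ^ 2) - 2 * ER * (∑ C ∈ P, R C) + N * ER ^ 2 := by
    have h1 : ∀ C ∈ P, (R C - ER) ^ 2 = R C ^ 2 - 2 * ER * R C + ER ^ 2 :=
      fun C _ => by ring
    rw [Finset.sum_congr rfl h1]
    rw [Finset.sum_add_distrib, Finset.sum_sub_distrib, ← Finset.mul_sum,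
      Finset.sum_const, hPcard, nsmul_eq_mul, hNdef]
  have hER' : ER = m * (cnt n ni 2 : ℝ) / N := by rw [hER, ← hsum1, hNdef]
  -- real cast facts
  have hn4 : (4:ℝ) ≤ (n:ℝ) := by exact_mod_cast hn
  have hniR : (2:ℝ) ≤ (ni:ℝ) := by exact_mod_cast hni1
  have hnin2 : (ni:ℝ) + 2 ≤ (n:ℝ) := by
    have : ni + 2 ≤ n := by omega
    exact_mod_cast this
  have hne1 : (n:ℝ) ≠ 0 := by linarith
  have hne2 : (n:ℝ) - 1 ≠ 0 := by linarith
  have hne3 : (n:ℝ) - 2 ≠ 0 := by linarith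
  have hne4 : (n:ℝ) - 3 ≠ 0 := by linarith
  have hne5 : (n:ℝ) - (ni:ℝ) - 1 ≠ 0 := by linarith
  have hNne : N ≠ 0 := ne_of_gt hNpos
  have hc2 : (cnt n ni 2 : ℝ) = (ni:ℝ) * ((ni:ℝ) - 1) * N / ((n:ℝ) * ((n:ℝ) - 1)) := by
    have := cnt2_eq hn hni1 hni2
    field_simp
    linear_combination this
  have hc3 : (cnt n ni 3 : ℝ)
      = (ni:ℝ) * ((ni:ℝ) - 1) * ((ni:ℝ) - 2) * N / ((n:ℝ) * ((n:ℝ) - 1) * ((n:ℝ) - 2)) := by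
    have := cnt3_eq hn hni1 hni2
    field_simp
    linear_combination this
  have hc4 : (cnt n ni 4 : ℝ)
      = (ni:ℝ) * ((ni:ℝ) - 1) * ((ni:ℝ) - 2) * ((ni:ℝ) - 3) * N
        / ((n:ℝ) * ((n:ℝ) - 1) * ((n:ℝ) - 2) * ((n:ℝ) - 3)) := by
    have := cnt4_eq hn hni1 hni2
    field_simp
    linear_combination this
  rw [show ((n.choose ni : ℕ) : ℝ) = N from rfl] at *
  rw [hexp, hsum1, hsum2, hER', hc2, hc3, hc4]
  field_simp
  ring
end

section
/- Let G be a finite graph on n vertices. Under the permutation null distribution where disjoint subsets C_i, C_j of sizes n_i, n_j are chosen uniformly at random (as part of a uniformly random partition into clusters of fixed sizes), the covariance of the within-cluster edge counts R_i and R_j equals [n_i n_j (n_i-1)(n_j-1) / (n(n-1)(n-2)(n-3))] * ( |G| - G_C - G_E ), where G_C = sum_t |G_t|^2 - (4/n)|G|^2 and G_E = 2|G|^2/(n(n-1)). -/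
open Finset


-- counting lemma: number of k-subsets of s containing fixed t ⊆ s
theorem count_contain {α : Type*} [DecidableEq α] (s t : Finset α) (k : ℕ)
    (hts : t ⊆ s) (htk : t.card ≤ k) :
    ((powersetCard k s).filter (fun C => t ⊆ C)).card
      = (s.card - t.card).choose (k - t.card) := by
  rw [← card_sdiff_of_subset hts, ← card_powersetCard (k - t.card) (s \ t)]
  apply Finset.card_bij' (fun C _ => C \ t) (fun D _ => D ∪ t)
  · intro C hC
    simp only [mem_filter, mem_powersetCard] at hC
    rw [mem_powersetCard]
    exact ⟨sdiff_subset_sdiff hC.1.1 le_rfl, by rw [card_sdiff_of_subset hC.2, hC.1.2]⟩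
  · intro D hD
    rw [mem_powersetCard] at hD
    rw [mem_filter, mem_powersetCard]
    have hDt : Disjoint D t := (sdiff_disjoint.mono_left hD.1)
    constructor
    · constructor
      · exact union_subset (hD.1.trans sdiff_subset) hts
      · rw [card_union_of_disjoint hDt, hD.2]
        omega
    · exact subset_union_right
  · intro C hC
    simp only [mem_filter] at hC
    rw [sdiff_union_of_subset hC.2]
  · intro D hD
    rw [mem_powersetCard] at hD
    have hDt : Disjoint D t := (sdiff_disjoint.mono_left hD.1)
    rw [union_sdiff_right, sdiff_eq_self_of_disjoint hDt]
theorem nat2 (a b : ℕ) : (b+2)*(b+1) * Nat.choose (a+2) (b+2) = (a+2)*(a+1) * Nat.choose a b := by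
  have h1 := Nat.add_one_mul_choose_eq a b
  have h2 := Nat.add_one_mul_choose_eq (a+1) (b+1)
  calc (b+2)*(b+1) * Nat.choose (a+2) (b+2)
      = (b+1) * ((a+2).choose (b+2) * (b+2)) := by ring
    _ = (b+1) * ((a+1+1) * ((a+1).choose (b+1))) := by rw [h2]
    _ = (a+2) * ((a+1).choose (b+1) * (b+1)) := by ring
    _ = (a+2) * ((a+1) * Nat.choose a b) := by rw [h1]
    _ = (a+2)*(a+1) * Nat.choose a b := by ring

theorem nat2' (a q : ℕ) : Nat.choose (a+q+2) a * ((q+2)*(q+1)) = (a+q+2)*(a+q+1) * Nat.choose (a+q) a := by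
  have h1 := Nat.choose_mul_succ_eq (a+q) a
  have h2 := Nat.choose_mul_succ_eq (a+q+1) a
  have e1 : a + q + 1 - a = q + 1 := by omega
  have e2 : a + q + 1 + 1 - a = q + 2 := by omega
  rw [e1] at h1; rw [e2] at h2
  calc Nat.choose (a+q+2) a * ((q+2)*(q+1))
      = ((a+q+1+1).choose a * (q+2)) * (q+1) := by ring_nf
    _ = ((a+q+1).choose a * (a+q+1+1)) * (q+1) := by rw [← h2]
    _ = ((a+q+1).choose a * (q+1)) * (a+q+2) := by ring
    _ = ((a+q).choose a * (a+q+1)) * (a+q+2) := by rw [← h1]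
    _ = (a+q+2)*(a+q+1) * Nat.choose (a+q) a := by ring
theorem chooseR2 (x y : ℕ) (hy : 2 ≤ y) (hx : y ≤ x) :
    ((x-2).choose (y-2) : ℝ) * ((x:ℝ)*((x:ℝ)-1)) = (x.choose y : ℝ) * ((y:ℝ)*((y:ℝ)-1)) := by
  obtain ⟨b, rfl⟩ : ∃ b, y = b + 2 := ⟨y - 2, by omega⟩
  obtain ⟨a, rfl⟩ : ∃ a, x = a + 2 := ⟨x - 2, by omega⟩
  have e2 : a + 2 - 2 = a := by omega
  have e3 : b + 2 - 2 = b := by omega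
  rw [e2, e3]
  have hc := congrArg (fun t : ℕ => (t : ℝ)) (nat2 a b)
  push_cast at hc ⊢
  nlinarith [hc]

theorem chooseR4 (x y z : ℕ) (hy : 2 ≤ y) (hz : 2 ≤ z) (hx : y + z ≤ x) :
    ((x-4).choose (y-2) : ℝ) * (((x-y-2).choose (z-2) : ℝ)) * ((x:ℝ)*((x:ℝ)-1)*((x:ℝ)-2)*((x:ℝ)-3)) =
    (x.choose y : ℝ) * (((x-y).choose z : ℝ)) * ((y:ℝ)*((y:ℝ)-1)*((z:ℝ)*((z:ℝ)-1))) := by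
  obtain ⟨a, rfl⟩ : ∃ a, y = a + 2 := ⟨y - 2, by omega⟩
  obtain ⟨b, rfl⟩ : ∃ b, z = b + 2 := ⟨z - 2, by omega⟩
  obtain ⟨c, rfl⟩ : ∃ c, x = a + b + c + 4 := ⟨x - a - b - 4, by omega⟩
  have e1 : a + b + c + 4 - 4 = a + b + c := by omega
  have e2 : a + 2 - 2 = a := by omega
  have e3 : b + 2 - 2 = b := by omega
  have e4 : a + b + c + 4 - (a+2) - 2 = b + c := by omega
  have e5 : a + b + c + 4 - (a+2) = b + c + 2 := by omega
  rw [e1, e2, e3, e4, e5]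
  -- E1 : (a+2)(a+1) C(a+b+c+4, a+2) = (a+b+c+4)(a+b+c+3) C(a+b+c+2, a)
  have E1 := nat2 (a+b+c+2) a
  have E1r : ((a:ℝ)+2)*((a:ℝ)+1) * (((a+b+c+4).choose (a+2) : ℕ) : ℝ)
      = ((a:ℝ)+(b:ℝ)+(c:ℝ)+4)*((a:ℝ)+(b:ℝ)+(c:ℝ)+3) * (((a+b+c+2).choose a : ℕ) : ℝ) := by
    have : ((a+2)*(a+1) * Nat.choose (a+b+c+2+2) (a+2) : ℕ) = ((a+b+c+2+2)*(a+b+c+2+1) * Nat.choose (a+b+c+2) a : ℕ) := E1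
    have hc := congrArg (fun t : ℕ => (t : ℝ)) this
    push_cast at hc
    have h44 : a+b+c+2+2 = a+b+c+4 := by omega
    rw [h44] at hc
    push_cast at hc
    linarith [hc]
  have E2 := nat2' a (b+c)
  have E2r : (((a+b+c+2).choose a : ℕ) : ℝ) * (((b:ℝ)+(c:ℝ)+2)*((b:ℝ)+(c:ℝ)+1))
      = ((a:ℝ)+(b:ℝ)+(c:ℝ)+2)*((a:ℝ)+(b:ℝ)+(c:ℝ)+1) * (((a+b+c).choose a : ℕ) : ℝ) := by
    have hc := congrArg (fun t : ℕ => (t : ℝ)) E2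
    have h1 : a + (b+c) + 2 = a+b+c+2 := by omega
    have h2 : a + (b+c) = a+b+c := by omega
    rw [h1, h2] at hc
    push_cast at hc
    linarith [hc]
  have E3 := nat2 (b+c) b
  have E3r : ((b:ℝ)+2)*((b:ℝ)+1) * (((b+c+2).choose (b+2) : ℕ) : ℝ)
      = ((b:ℝ)+(c:ℝ)+2)*((b:ℝ)+(c:ℝ)+1) * (((b+c).choose b : ℕ) : ℝ) := by
    have hc := congrArg (fun t : ℕ => (t : ℝ)) E3
    have h1 : b + c + 2 = (b+c)+2 := by omega
    rw [h1]
    push_cast at hc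
    push_cast
    linarith [hc]
  push_cast
  linear_combination (-((((b:ℝ)+2)*((b:ℝ)+1))) * (((b+c+2).choose (b+2) : ℕ) : ℝ)) * E1r +
    (-(((a:ℝ)+(b:ℝ)+(c:ℝ)+4)*((a:ℝ)+(b:ℝ)+(c:ℝ)+3)) * (((b+c).choose b : ℕ) : ℝ)) * E2r +
    (-(((a:ℝ)+(b:ℝ)+(c:ℝ)+4)*((a:ℝ)+(b:ℝ)+(c:ℝ)+3)) * (((a+b+c+2).choose a : ℕ) : ℝ)) * E3r
theorem pair_count {α : Type*} [DecidableEq α] (s : Finset α) (a b : α) (hab : a ≠ b)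
    (ha : a ∈ s) (hb : b ∈ s) (k : ℕ) (hk : 2 ≤ k) :
    ((powersetCard k s).filter (fun C => a ∈ C ∧ b ∈ C)).card
      = (s.card - 2).choose (k - 2) := by
  have h2 : ({a, b} : Finset α).card = 2 := card_pair hab
  have := count_contain s {a, b} k (by simp [insert_subset_iff, ha, hb]) (by omega)
  rw [h2] at this
  rw [← this]
  apply congrArg
  apply filter_congr
  intro C _
  simp [insert_subset_iff]
open scoped Classical in
theorem momentA {n : ℕ} (G : SimpleGraph (Fin n)) [DecidableRel G.Adj] (k : ℕ) (hk : 2 ≤ k) :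
    ∑ C ∈ powersetCard k (univ : Finset (Fin n)),
        (G.edgeFinset.filter (fun e => ∀ v ∈ e, v ∈ C)).card
      = G.edgeFinset.card * (n - 2).choose (k - 2) := by
  simp only [Finset.card_filter]
  rw [Finset.sum_comm]
  rw [Finset.sum_congr rfl (fun e he => ?_), Finset.sum_const, smul_eq_mul]
  induction e using Sym2.ind with
  | _ a b =>
    have hadj : G.Adj a b := by rwa [SimpleGraph.mem_edgeFinset, SimpleGraph.mem_edgeSet] at he
    have hab : a ≠ b := hadj.ne
    simp only [Sym2.forall_mem_pair]
    rw [← Finset.card_filter]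
    have := pair_count (univ : Finset (Fin n)) a b hab (mem_univ a) (mem_univ b) k hk
    rw [card_univ, Fintype.card_fin] at this
    exact this
open scoped Classical in
theorem innerB {n : ℕ} (G : SimpleGraph (Fin n)) [DecidableRel G.Adj]
    (s : Finset (Fin n)) (k : ℕ) (hk : 2 ≤ k) :
    ∑ Cj ∈ powersetCard k s, (G.edgeFinset.filter (fun f => ∀ v ∈ f, v ∈ Cj)).card
      = (s.card - 2).choose (k - 2) * (G.edgeFinset.filter (fun f => ∀ v ∈ f, v ∈ s)).card := by
  simp only [Finset.card_filter]
  rw [Finset.sum_comm]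
  have step : ∀ f ∈ G.edgeFinset, (∑ Cj ∈ powersetCard k s, if ∀ v ∈ f, v ∈ Cj then (1:ℕ) else 0)
      = if ∀ v ∈ f, v ∈ s then (s.card - 2).choose (k - 2) else 0 := by
    intro f hf
    induction f using Sym2.ind with
    | _ c d =>
      have hcd : c ≠ d := (by rwa [SimpleGraph.mem_edgeFinset, SimpleGraph.mem_edgeSet] at hf : G.Adj c d).ne
      simp only [Sym2.forall_mem_pair]
      by_cases hcs : c ∈ s ∧ d ∈ s
      · rw [if_pos hcs, ← Finset.card_filter]
        exact pair_count s c d hcd hcs.1 hcs.2 k hk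
      · rw [if_neg hcs]
        apply Finset.sum_eq_zero
        intro C hC
        rw [mem_powersetCard] at hC
        exact if_neg (fun h => hcs ⟨hC.1 h.1, hC.1 h.2⟩)
  rw [Finset.sum_congr rfl step, ← Finset.sum_filter, Finset.sum_const, smul_eq_mul, mul_comm,
    Finset.card_filter]

open scoped Classical in
theorem middleB {n : ℕ} (G : SimpleGraph (Fin n)) [DecidableRel G.Adj]
    (k : ℕ) (hk : 2 ≤ k)
    (e f : Sym2 (Fin n)) (he : e ∈ G.edgeFinset) (hf : f ∈ G.edgeFinset) :
    ∑ Ci ∈ powersetCard k (univ : Finset (Fin n)),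
        (if ∀ v ∈ e, v ∈ Ci then (1:ℕ) else 0) * (if ∀ v ∈ f, v ∉ Ci then (1:ℕ) else 0)
      = if ∀ v ∈ e, v ∉ f then (n - 4).choose (k - 2) else 0 := by
  by_cases hdisj : ∀ v ∈ e, v ∉ f
  · rw [if_pos hdisj]
    induction e using Sym2.ind with
    | _ a b =>
    induction f using Sym2.ind with
    | _ c d =>
      have hab : a ≠ b := (by rwa [SimpleGraph.mem_edgeFinset, SimpleGraph.mem_edgeSet] at he : G.Adj a b).ne
      have hac : a ∉ s(c,d) := hdisj a (Sym2.mem_mk_left a b)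
      have hbc : b ∉ s(c,d) := hdisj b (Sym2.mem_mk_right a b)
      simp only [Sym2.mem_iff, not_or] at hac hbc
      simp only [ite_zero_mul_ite_zero, mul_one, Sym2.forall_mem_pair]
      rw [← Finset.card_filter]
      have hset : (powersetCard k (univ : Finset (Fin n))).filter
            (fun C => (a ∈ C ∧ b ∈ C) ∧ (c ∉ C ∧ d ∉ C))
          = (powersetCard k ((univ : Finset (Fin n)) \ {c, d})).filter (fun C => a ∈ C ∧ b ∈ C) := by
        ext C
        simp only [mem_filter, mem_powersetCard, subset_sdiff, subset_univ, true_and,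
          disjoint_insert_right, disjoint_singleton_right]
        tauto
      rw [hset]
      have hcard := pair_count ((univ : Finset (Fin n)) \ {c, d}) a b hab
        (by simp [hac.1, hac.2]) (by simp [hbc.1, hbc.2]) k hk
      have hcd : c ≠ d := (by rwa [SimpleGraph.mem_edgeFinset, SimpleGraph.mem_edgeSet] at hf : G.Adj c d).ne
      have hcards : ((univ : Finset (Fin n)) \ {c, d}).card = n - 2 := by
        rw [card_sdiff_of_subset (subset_univ _), card_univ, Fintype.card_fin, card_pair hcd]
      rw [hcards] at hcard
      rw [hcard]
      congr 1
  · rw [if_neg hdisj]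
    push_neg at hdisj
    obtain ⟨v, hv1, hv2⟩ := hdisj
    apply Finset.sum_eq_zero
    intro C _
    rcases Classical.em (∀ w ∈ e, w ∈ C) with h1 | h1
    · rw [if_pos h1, if_neg (fun h2 => h2 v hv2 (h1 v hv1)), mul_zero]
    · rw [if_neg h1, zero_mul]
open scoped Classical in
theorem momentB {n : ℕ} (G : SimpleGraph (Fin n)) [DecidableRel G.Adj]
    (ni nj : ℕ) (hi : 2 ≤ ni) (hj : 2 ≤ nj) :
    ∑ Ci ∈ powersetCard ni (univ : Finset (Fin n)),
      ∑ Cj ∈ powersetCard nj ((univ : Finset (Fin n)) \ Ci),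
        (G.edgeFinset.filter (fun e => ∀ v ∈ e, v ∈ Ci)).card *
          (G.edgeFinset.filter (fun f => ∀ v ∈ f, v ∈ Cj)).card
      = ((G.edgeFinset ×ˢ G.edgeFinset).filter (fun p => ∀ v ∈ p.1, v ∉ p.2)).card *
          (n - 4).choose (ni - 2) * ((n - ni - 2).choose (nj - 2)) := by
  have step1 : ∀ Ci ∈ powersetCard ni (univ : Finset (Fin n)),
      ∑ Cj ∈ powersetCard nj ((univ : Finset (Fin n)) \ Ci),
          (G.edgeFinset.filter (fun e => ∀ v ∈ e, v ∈ Ci)).card *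
            (G.edgeFinset.filter (fun f => ∀ v ∈ f, v ∈ Cj)).card
        = (n - ni - 2).choose (nj - 2) *
            ((G.edgeFinset.filter (fun e => ∀ v ∈ e, v ∈ Ci)).card *
              (G.edgeFinset.filter (fun f => ∀ v ∈ f, v ∉ Ci)).card) := by
    intro Ci hCi
    rw [mem_powersetCard] at hCi
    rw [← Finset.mul_sum]
    have hc : ((univ : Finset (Fin n)) \ Ci).card = n - ni := by
      rw [card_sdiff_of_subset (subset_univ _), card_univ, Fintype.card_fin, hCi.2]
    have h1 := innerB G ((univ : Finset (Fin n)) \ Ci) nj hj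
    rw [hc] at h1
    rw [h1]
    have h2 : G.edgeFinset.filter (fun f => ∀ v ∈ f, v ∈ (univ : Finset (Fin n)) \ Ci)
        = G.edgeFinset.filter (fun f => ∀ v ∈ f, v ∉ Ci) := by
      apply filter_congr; intro f _; simp [mem_sdiff]
    rw [h2]
    ring
  rw [Finset.sum_congr rfl step1, ← Finset.mul_sum]
  have step2 : ∑ Ci ∈ powersetCard ni (univ : Finset (Fin n)),
      (G.edgeFinset.filter (fun e => ∀ v ∈ e, v ∈ Ci)).card *
        (G.edgeFinset.filter (fun f => ∀ v ∈ f, v ∉ Ci)).card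
      = ((G.edgeFinset ×ˢ G.edgeFinset).filter (fun p => ∀ v ∈ p.1, v ∉ p.2)).card *
          (n - 4).choose (ni - 2) := by
    have expand : ∀ Ci : Finset (Fin n),
        (G.edgeFinset.filter (fun e => ∀ v ∈ e, v ∈ Ci)).card *
          (G.edgeFinset.filter (fun f => ∀ v ∈ f, v ∉ Ci)).card
        = ∑ e ∈ G.edgeFinset, ∑ f ∈ G.edgeFinset,
            (if ∀ v ∈ e, v ∈ Ci then (1:ℕ) else 0) * (if ∀ v ∈ f, v ∉ Ci then (1:ℕ) else 0) := by
      intro Ci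
      rw [Finset.card_filter, Finset.card_filter, Finset.sum_mul_sum]
    simp only [expand]
    rw [Finset.sum_comm]
    have swap2 : ∀ e ∈ G.edgeFinset,
        ∑ Ci ∈ powersetCard ni (univ : Finset (Fin n)), ∑ f ∈ G.edgeFinset,
            (if ∀ v ∈ e, v ∈ Ci then (1:ℕ) else 0) * (if ∀ v ∈ f, v ∉ Ci then (1:ℕ) else 0)
        = ∑ f ∈ G.edgeFinset, (if ∀ v ∈ e, v ∉ f then (n - 4).choose (ni - 2) else 0) := by
      intro e he
      rw [Finset.sum_comm]
      exact Finset.sum_congr rfl (fun f hf => middleB G ni hi e f he hf)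
    rw [Finset.sum_congr rfl swap2]
    rw [← Finset.sum_product']
    rw [← Finset.sum_filter, Finset.sum_const, smul_eq_mul]
  rw [step2]
  ring
open scoped Classical in
theorem partitionN {n : ℕ} (G : SimpleGraph (Fin n)) [DecidableRel G.Adj] :
    G.edgeFinset.card * G.edgeFinset.card
      = ((G.edgeFinset ×ˢ G.edgeFinset).filter (fun p => ∀ v ∈ p.1, v ∉ p.2)).card
        + (∑ t : Fin n, G.degree t * (G.degree t - 1))
        + G.edgeFinset.card := by
  classical
  set E := G.edgeFinset with hE
  have h0 : (E ×ˢ E).card = E.card * E.card := card_product E E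
  have hsplit := Finset.card_filter_add_card_filter_not
    (s := E ×ˢ E) (p := fun p => ∀ v ∈ p.1, v ∉ p.2)
  have hsplit2 := Finset.card_filter_add_card_filter_not
    (s := (E ×ˢ E).filter (fun p => ¬ ∀ v ∈ p.1, v ∉ p.2)) (p := fun p => p.1 = p.2)
  rw [Finset.filter_filter, Finset.filter_filter] at hsplit2
  have heq : ((E ×ˢ E).filter (fun p => (¬ ∀ v ∈ p.1, v ∉ p.2) ∧ p.1 = p.2)).card = E.card := by
    rw [show (E ×ˢ E).filter (fun p => (¬ ∀ v ∈ p.1, v ∉ p.2) ∧ p.1 = p.2)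
        = E.image (fun e => (e, e)) from ?_]
    · exact card_image_of_injective E (fun a b h => (Prod.mk.injEq _ _ _ _).mp h |>.1)
    · ext p
      simp only [mem_filter, mem_product, mem_image, Prod.ext_iff]
      constructor
      · rintro ⟨⟨h1, _⟩, _, h3⟩
        exact ⟨p.1, h1, rfl, h3⟩
      · rintro ⟨e, heE, h1, h2⟩
        subst h1
        refine ⟨⟨heE, by rw [← h2]; exact heE⟩, ?_, h2⟩
        intro hcon
        exact hcon p.1.out.1 (Sym2.out_fst_mem p.1) (by rw [← h2]; exact Sym2.out_fst_mem p.1)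
  have hshare : ((E ×ˢ E).filter (fun p => (¬ ∀ v ∈ p.1, v ∉ p.2) ∧ ¬ p.1 = p.2)).card
      = ∑ t : Fin n, G.degree t * (G.degree t - 1) := by
    have hdeg : ∀ t : Fin n, G.degree t * (G.degree t - 1) = (G.incidenceFinset t).offDiag.card := by
      intro t
      rw [Finset.offDiag_card, G.card_incidenceFinset_eq_degree]
      rcases Nat.eq_zero_or_pos (G.degree t) with h | h
      · simp [h]
      · obtain ⟨d, hd⟩ : ∃ d, G.degree t = d + 1 := ⟨G.degree t - 1, by omega⟩
        rw [hd]
        simp only [Nat.add_sub_cancel]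
        have : (d+1)*(d+1) = (d+1)*d + (d+1) := by ring
        omega
    simp only [hdeg]
    have hoff : ∀ t : Fin n, (G.incidenceFinset t).offDiag
        = (E ×ˢ E).filter (fun p => t ∈ p.1 ∧ t ∈ p.2 ∧ p.1 ≠ p.2) := by
      intro t
      ext p
      simp only [mem_offDiag, SimpleGraph.mem_incidenceFinset, SimpleGraph.incidenceSet,
        Set.mem_setOf_eq, mem_filter, mem_product, hE, SimpleGraph.mem_edgeFinset]
      tauto
    simp only [hoff, Finset.card_filter]
    rw [Finset.sum_comm]
    refine Finset.sum_congr rfl (fun p hp => ?_)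
    symm
    rw [mem_product] at hp
    rcases Classical.em (p.1 = p.2) with hpe | hpe
    · rw [if_neg (by tauto)]
      apply Finset.sum_eq_zero
      intro t _
      rw [if_neg (by tauto)]
    · rcases Classical.em (∀ v ∈ p.1, v ∉ p.2) with hd | hd
      · rw [if_neg (by tauto)]
        apply Finset.sum_eq_zero
        intro t _
        exact if_neg (fun h => hd t h.1 h.2.1)
      · rw [if_pos ⟨hd, hpe⟩]
        push_neg at hd
        obtain ⟨v, hv1, hv2⟩ := hd
        rw [Finset.sum_eq_single v]
        · rw [if_pos ⟨hv1, hv2, hpe⟩]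
        · intro t _ htv
          rw [if_neg]
          rintro ⟨ht1, ht2, -⟩
          exact hpe (Sym2.eq_of_ne_mem htv ht1 hv1 ht2 hv2)
        · intro habs
          exact absurd (mem_univ v) habs
  omega

open scoped Classical in
theorem filter_zero {n : ℕ} (G : SimpleGraph (Fin n)) [DecidableRel G.Adj]
    (C : Finset (Fin n)) (hC : C.card < 2) :
    (G.edgeFinset.filter (fun e => ∀ v ∈ e, v ∈ C)).card = 0 := by
  rw [Finset.card_eq_zero, filter_eq_empty_iff]
  intro e he
  induction e using Sym2.ind with
  | _ a b =>
    have hab : a ≠ b := (by rwa [SimpleGraph.mem_edgeFinset, SimpleGraph.mem_edgeSet] at he : G.Adj a b).ne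
    simp only [Sym2.forall_mem_pair]
    rintro ⟨ha, hb⟩
    have hsub : ({a, b} : Finset (Fin n)) ⊆ C := by simp [insert_subset_iff, ha, hb]
    have := card_le_card hsub
    rw [card_pair hab] at this
    omega

set_option maxHeartbeats 1000000 in
open scoped Classical in
theorem covariance_within_cluster_edge_counts {n : ℕ} (hn : 4 ≤ n)
    (G : SimpleGraph (Fin n)) [DecidableRel G.Adj]
    (ni nj : ℕ) (hni : 1 ≤ ni) (hnj : 1 ≤ nj) (hninj : ni + nj ≤ n)
    (R : Finset (Fin n) → ℝ)
    (hR : ∀ C, R C = ((G.edgeFinset.filter (fun e => ∀ v ∈ e, v ∈ C)).card : ℝ)) :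
    (∑ Ci ∈ Finset.powersetCard ni (Finset.univ : Finset (Fin n)),
          ∑ Cj ∈ Finset.powersetCard nj ((Finset.univ : Finset (Fin n)) \ Ci),
            R Ci * R Cj) / ((n.choose ni : ℝ) * ((n - ni).choose nj : ℝ)) -
      ((∑ C ∈ Finset.powersetCard ni (Finset.univ : Finset (Fin n)), R C) / (n.choose ni)) *
        ((∑ C ∈ Finset.powersetCard nj (Finset.univ : Finset (Fin n)), R C) / (n.choose nj)) =
      ((ni : ℝ) * (nj : ℝ) * ((ni : ℝ) - 1) * ((nj : ℝ) - 1)) /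
          ((n : ℝ) * ((n : ℝ) - 1) * ((n : ℝ) - 2) * ((n : ℝ) - 3)) *
        ((G.edgeFinset.card : ℝ) -
          ((∑ t : Fin n, (G.degree t : ℝ) ^ 2) - 4 / (n : ℝ) * (G.edgeFinset.card : ℝ) ^ 2) -
          2 * (G.edgeFinset.card : ℝ) ^ 2 / ((n : ℝ) * ((n : ℝ) - 1))) := by
  by_cases hni2 : 2 ≤ ni
  · by_cases hnj2 : 2 ≤ nj
    · -- main case
      have hSi : (∑ C ∈ Finset.powersetCard ni (Finset.univ : Finset (Fin n)), R C)
          = ((G.edgeFinset.card * (n - 2).choose (ni - 2) : ℕ) : ℝ) := by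
        simp only [hR]
        exact_mod_cast congrArg (Nat.cast : ℕ → ℝ) (momentA G ni hni2)
      have hSj : (∑ C ∈ Finset.powersetCard nj (Finset.univ : Finset (Fin n)), R C)
          = ((G.edgeFinset.card * (n - 2).choose (nj - 2) : ℕ) : ℝ) := by
        simp only [hR]
        exact_mod_cast congrArg (Nat.cast : ℕ → ℝ) (momentA G nj hnj2)
      have hDD : (∑ Ci ∈ Finset.powersetCard ni (Finset.univ : Finset (Fin n)),
            ∑ Cj ∈ Finset.powersetCard nj ((Finset.univ : Finset (Fin n)) \ Ci), R Ci * R Cj)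
          = ((((G.edgeFinset ×ˢ G.edgeFinset).filter (fun p => ∀ v ∈ p.1, v ∉ p.2)).card *
              (n - 4).choose (ni - 2) * ((n - ni - 2).choose (nj - 2)) : ℕ) : ℝ) := by
        simp only [hR]
        exact_mod_cast congrArg (Nat.cast : ℕ → ℝ) (momentB G ni nj hni2 hnj2)
      rw [hSi, hSj, hDD]
      push_cast
      -- abbreviations
      set m : ℝ := (G.edgeFinset.card : ℝ) with hm
      set S : ℝ := ∑ t : Fin n, (G.degree t : ℝ) ^ 2 with hSdef
      set X : ℝ := (n.choose ni : ℝ) with hX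
      set Y : ℝ := ((n - ni).choose nj : ℝ) with hY
      set Z : ℝ := (n.choose nj : ℝ) with hZ
      set A : ℝ := ((n - 2).choose (ni - 2) : ℝ) with hA
      set B : ℝ := ((n - 2).choose (nj - 2) : ℝ) with hB
      set P4 : ℝ := ((n - 4).choose (ni - 2) : ℝ) with hP4
      set Q4 : ℝ := ((n - ni - 2).choose (nj - 2) : ℝ) with hQ4
      set N : ℝ := ((((G.edgeFinset ×ˢ G.edgeFinset).filter
          (fun p => ∀ v ∈ p.1, v ∉ p.2)).card : ℕ) : ℝ) with hN
      -- positivity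
      have hnR : (4:ℝ) ≤ (n:ℝ) := by exact_mod_cast hn
      have hniR : (2:ℝ) ≤ (ni:ℝ) := by exact_mod_cast hni2
      have hnjR : (2:ℝ) ≤ (nj:ℝ) := by exact_mod_cast hnj2
      have hXpos : (0:ℝ) < X := by
        rw [hX]; exact_mod_cast Nat.choose_pos (by omega : ni ≤ n)
      have hYpos : (0:ℝ) < Y := by
        rw [hY]; exact_mod_cast Nat.choose_pos (by omega : nj ≤ n - ni)
      have hZpos : (0:ℝ) < Z := by
        rw [hZ]; exact_mod_cast Nat.choose_pos (by omega : nj ≤ n)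
      have hXne := ne_of_gt hXpos
      have hYne := ne_of_gt hYpos
      have hZne := ne_of_gt hZpos
      have hn0 : (n:ℝ) ≠ 0 := by linarith
      have hn1 : (n:ℝ) - 1 ≠ 0 := by linarith
      have hn2 : (n:ℝ) - 2 ≠ 0 := by linarith
      have hn3 : (n:ℝ) - 3 ≠ 0 := by linarith
      have hd2 : (n:ℝ) * ((n:ℝ) - 1) ≠ 0 := mul_ne_zero hn0 hn1
      have hd4 : (n:ℝ) * ((n:ℝ) - 1) * ((n:ℝ) - 2) * ((n:ℝ) - 3) ≠ 0 :=
        mul_ne_zero (mul_ne_zero hd2 hn2) hn3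
      -- choose identities
      have f1 : A * ((n:ℝ) * ((n:ℝ) - 1)) = X * ((ni:ℝ) * ((ni:ℝ) - 1)) :=
        chooseR2 n ni hni2 (by omega)
      have f2 : B * ((n:ℝ) * ((n:ℝ) - 1)) = Z * ((nj:ℝ) * ((nj:ℝ) - 1)) :=
        chooseR2 n nj hnj2 (by omega)
      have f3 : P4 * Q4 * ((n:ℝ) * ((n:ℝ) - 1) * ((n:ℝ) - 2) * ((n:ℝ) - 3))
          = X * Y * ((ni:ℝ) * ((ni:ℝ) - 1) * ((nj:ℝ) * ((nj:ℝ) - 1))) :=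
        chooseR4 n ni nj hni2 hnj2 hninj
      -- N = m^2 + m - S
      have hdd : (∑ t : Fin n, ((G.degree t * (G.degree t - 1) : ℕ) : ℝ)) = S - 2 * m := by
        have hper : ∀ t : Fin n, ((G.degree t * (G.degree t - 1) : ℕ) : ℝ)
            = (G.degree t : ℝ)^2 - (G.degree t : ℝ) := by
          intro t
          rcases Nat.eq_zero_or_pos (G.degree t) with h | h
          · simp [h]
          · obtain ⟨d, hdeq⟩ : ∃ d, G.degree t = d + 1 := ⟨G.degree t - 1, by omega⟩
            rw [hdeq]
            push_cast [Nat.add_sub_cancel]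
            ring
        rw [Finset.sum_congr rfl (fun t _ => hper t), Finset.sum_sub_distrib]
        have hs : ∑ t : Fin n, (G.degree t : ℝ) = 2 * m := by
          rw [hm]
          exact_mod_cast congrArg (Nat.cast : ℕ → ℝ) G.sum_degrees_eq_twice_card_edges
        rw [hs, hSdef]
      have f4 : N = m ^ 2 + m - S := by
        have hc := congrArg (Nat.cast : ℕ → ℝ) (partitionN G)
        rw [Nat.cast_mul, Nat.cast_add, Nat.cast_add, Nat.cast_sum, hdd] at hc
        rw [← hm, ← hN] at hc
        linear_combination (-1:ℝ) * hc
      -- division identities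
      have g1 : A / X = ((ni:ℝ) * ((ni:ℝ) - 1)) / ((n:ℝ) * ((n:ℝ) - 1)) :=
        (div_eq_div_iff hXne hd2).mpr (by linarith [f1])
      have g2 : B / Z = ((nj:ℝ) * ((nj:ℝ) - 1)) / ((n:ℝ) * ((n:ℝ) - 1)) :=
        (div_eq_div_iff hZne hd2).mpr (by linarith [f2])
      have g3 : (P4 * Q4) / (X * Y)
          = ((ni:ℝ) * ((ni:ℝ) - 1) * ((nj:ℝ) * ((nj:ℝ) - 1)))
              / ((n:ℝ) * ((n:ℝ) - 1) * ((n:ℝ) - 2) * ((n:ℝ) - 3)) :=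
        (div_eq_div_iff (mul_ne_zero hXne hYne) hd4).mpr (by linarith [f3])
      have lhs_eq : (N * P4 * Q4) / (X * Y) - (m * A) / X * ((m * B) / Z)
          = N * ((P4 * Q4) / (X * Y)) - m ^ 2 * (A / X) * (B / Z) := by
        field_simp
      rw [lhs_eq, g1, g2, g3, f4]
      field_simp
      ring
    · -- nj = 1
      have hz : ∀ C : Finset (Fin n), C.card < 2 → R C = 0 := fun C hC => by
        rw [hR, filter_zero G C hC]; norm_num
      have hD0 : (∑ Ci ∈ Finset.powersetCard ni (Finset.univ : Finset (Fin n)),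
          ∑ Cj ∈ Finset.powersetCard nj ((Finset.univ : Finset (Fin n)) \ Ci),
            R Ci * R Cj) = 0 :=
        Finset.sum_eq_zero (fun Ci _ => Finset.sum_eq_zero (fun Cj hCj => by
          rw [hz Cj (by have := (mem_powersetCard.mp hCj).2; omega), mul_zero]))
      have hM0 : (∑ C ∈ Finset.powersetCard nj (Finset.univ : Finset (Fin n)), R C) = 0 :=
        Finset.sum_eq_zero (fun C hC => hz C (by have := (mem_powersetCard.mp hC).2; omega))
      have hnj1 : (nj:ℝ) = 1 := by rw [show nj = 1 from by omega]; norm_num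
      rw [hD0, hM0, hnj1]
      ring
  · -- ni = 1
    have hz : ∀ C : Finset (Fin n), C.card < 2 → R C = 0 := fun C hC => by
      rw [hR, filter_zero G C hC]; norm_num
    have hD0 : (∑ Ci ∈ Finset.powersetCard ni (Finset.univ : Finset (Fin n)),
        ∑ Cj ∈ Finset.powersetCard nj ((Finset.univ : Finset (Fin n)) \ Ci),
          R Ci * R Cj) = 0 :=
      Finset.sum_eq_zero (fun Ci hCi => Finset.sum_eq_zero (fun Cj _ => by
        rw [hz Ci (by have := (mem_powersetCard.mp hCi).2; omega), zero_mul]))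
    have hM0 : (∑ C ∈ Finset.powersetCard ni (Finset.univ : Finset (Fin n)), R C) = 0 :=
      Finset.sum_eq_zero (fun C hC => hz C (by have := (mem_powersetCard.mp hC).2; omega))
    have hni1 : (ni:ℝ) = 1 := by rw [show ni = 1 from by omega]; norm_num
    rw [hD0, hM0, hni1]
    ring
end
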